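/- Let Σ be a finite simplicial complex and let L be a valid interleaved removal sequence on Σ. Suppose the operation at step i removes a reduction pair or a top simplex, and let Σ'_{i−1} and Σ'_i be the remaining families before and after step i. If (α, β) is a coreduction pair in Σ'_i, then (α, β) was already a coreduction pair in Σ'_{i−1}. (Remark 2, second part: in an interleaved-based algorithm, a reduction pair or top simplex removal cannot make a coreduction pair feasible.) -/

import Mathlib

open Finset

variable {α : Type*}

/-- `σ` is an immediate face of `τ`. -/
def ImmFace (σ τ : Finset α) : Prop :=
  σ ⊆ τ ∧ σ.card + 1 = τ.card

/-- A simplicial complex: a family of nonempty finsets closed under nonempty subsets. -/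
def IsComplex (S : Set (Finset α)) : Prop :=
  (∀ σ ∈ S, σ.Nonempty) ∧ ∀ τ ∈ S, ∀ σ : Finset α, σ ⊆ τ → σ.Nonempty → σ ∈ S

/-- Immediate boundary of `τ` in the family `S`. -/
def bd (S : Set (Finset α)) (τ : Finset α) : Set (Finset α) :=
  {σ ∈ S | ImmFace σ τ}

/-- Immediate coboundary of `σ` in the family `S`. -/
def cbd (S : Set (Finset α)) (σ : Finset α) : Set (Finset α) :=
  {τ ∈ S | ImmFace σ τ}

/-- `(σ, τ)` is a coreduction pair in `S`. -/
def CoredPair (S : Set (Finset α)) (σ τ : Finset α) : Prop :=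
  σ ∈ S ∧ τ ∈ S ∧ ImmFace σ τ ∧ bd S τ = {σ}

/-- `(σ, τ)` is a reduction pair in `S`. -/
def RedPair (S : Set (Finset α)) (σ τ : Finset α) : Prop :=
  σ ∈ S ∧ τ ∈ S ∧ ImmFace σ τ ∧ cbd S σ = {τ}

/-- `σ` is a free simplex in `S`. -/
def FreeSimplex (S : Set (Finset α)) (σ : Finset α) : Prop :=
  σ ∈ S ∧ bd S σ = ∅

/-- `σ` is a top simplex in `S`. -/
def TopSimplex (S : Set (Finset α)) (σ : Finset α) : Prop :=
  σ ∈ S ∧ cbd S σ = ∅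

/-- `S'` is an upward-closed subfamily of `S`. -/
def UpClosedIn (S S' : Set (Finset α)) : Prop :=
  S' ⊆ S ∧ ∀ σ ∈ S', ∀ τ ∈ S, σ ⊆ τ → τ ∈ S'

/-- An operation: removal of a pair of simplices, or of a single simplex. -/
abbrev Op (α : Type*) := (Finset α × Finset α) ⊕ Finset α

/-- Excise the simplices of an operation from a family. -/
def removeOp (S : Set (Finset α)) : Op α → Set (Finset α)
  | Sum.inl (σ, τ) => S \ {σ, τ}
  | Sum.inr σ => S \ {σ}

/-- Remaining family after performing a list of operations in order. -/
def remaining (S : Set (Finset α)) (L : List (Op α)) : Set (Finset α) :=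
  L.foldl removeOp S

/-- A coreduction-based removal sequence: every pair is a coreduction pair and
every single simplex is free, in the current remaining family. -/
def IsCoredSeq (S : Set (Finset α)) : List (Op α) → Prop
  | [] => True
  | o :: L =>
      (match o with
        | Sum.inl (σ, τ) => CoredPair S σ τ
        | Sum.inr σ => FreeSimplex S σ) ∧ IsCoredSeq (removeOp S o) L

/-- A reduction-based removal sequence: every pair is a reduction pair and
every single simplex is top, in the current remaining family. -/
def IsRedSeq (S : Set (Finset α)) : List (Op α) → Prop
  | [] => True
  | o :: L =>
      (match o with
        | Sum.inl (σ, τ) => RedPair S σ τ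
        | Sum.inr σ => TopSimplex S σ) ∧ IsRedSeq (removeOp S o) L

/-- A valid interleaved removal sequence: every pair is a coreduction or
reduction pair, and every single simplex is free or top, in the current
remaining family. -/
def IsInterSeq (S : Set (Finset α)) : List (Op α) → Prop
  | [] => True
  | o :: L =>
      (match o with
        | Sum.inl (σ, τ) => CoredPair S σ τ ∨ RedPair S σ τ
        | Sum.inr σ => FreeSimplex S σ ∨ TopSimplex S σ) ∧ IsInterSeq (removeOp S o) L

/-- A discrete vector field on `S`: pairs (face, immediate coface) of simplices of `S`,
each simplex of `S` belonging to at most one pair. -/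
def IsDVF (S : Set (Finset α)) (V : Set (Finset α × Finset α)) : Prop :=
  (∀ p ∈ V, p.1 ∈ S ∧ p.2 ∈ S ∧ ImmFace p.1 p.2) ∧
  ∀ σ ∈ S, ∀ p ∈ V, ∀ q ∈ V,
    (σ = p.1 ∨ σ = p.2) → (σ = q.1 ∨ σ = q.2) → p = q

/-- A `V`-path: a nonempty sequence of pairs of `V` such that each `σ_{i+1}` is an
immediate face of `τ_i` different from `σ_i`. -/
def IsVPath (V : Set (Finset α × Finset α)) (P : List (Finset α × Finset α)) : Prop :=
  P ≠ [] ∧ (∀ p ∈ P, p ∈ V) ∧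
  P.Chain' (fun p q => ImmFace q.1 p.2 ∧ q.1 ≠ p.1)

/-- A closed `V`-path: `σ_1` is an immediate face of `τ_r` different from `σ_r`. -/
def IsClosedVPath (V : Set (Finset α × Finset α))
    (P : List (Finset α × Finset α)) : Prop :=
  ∃ hne : P ≠ [], IsVPath V P ∧
    ImmFace (P.head hne).1 (P.getLast hne).2 ∧
    (P.head hne).1 ≠ (P.getLast hne).1

/-- The lower star of a vertex `v` with respect to a vertex function `F`. -/
def lowerStar (S : Set (Finset α)) (F : α → ℝ) (v : α) : Set (Finset α) :=
  {σ ∈ S | v ∈ σ ∧ ∀ w ∈ σ, F v ≤ F w}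

/-!
The remaining family stays order-convex in the inclusion order (`Set.OrdConnected`): a complex is,
and each admissible operation removes a set of simplices that is closed downwards (coreduction pair,
free simplex) or upwards (reduction pair, top simplex) within the current family; removing such a set
preserves convexity. For a reduction pair or a top simplex the removed set is upward closed, so none
of its members is an immediate face of a surviving simplex `b`, and the boundary of `b` is unchanged.
-/

def DownClosedIn (S R : Set (Finset α)) : Prop :=
  R ⊆ S ∧ ∀ σ ∈ R, ∀ τ ∈ S, τ ⊆ σ → τ ∈ R

theorem IsComplex.ordConnected {S : Set (Finset α)} (hS : IsComplex S) : S.OrdConnected :=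
  ⟨fun _ hσ _ hτ _ hρ => hS.2 _ hτ _ hρ.2 ((hS.1 _ hσ).mono hρ.1)⟩

theorem Set.OrdConnected.diff_of_upClosedIn {S R : Set (Finset α)} (hS : S.OrdConnected)
    (hR : UpClosedIn S R) : (S \ R).OrdConnected := by
  refine ⟨fun σ hσ τ hτ ρ hρ => ⟨hS.out hσ.1 hτ.1 hρ, fun hρR => hτ.2 ?_⟩⟩
  exact hR.2 ρ hρR τ hτ.1 hρ.2

theorem Set.OrdConnected.diff_of_downClosedIn {S R : Set (Finset α)} (hS : S.OrdConnected)
    (hR : DownClosedIn S R) : (S \ R).OrdConnected := by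
  refine ⟨fun σ hσ τ hτ ρ hρ => ⟨hS.out hσ.1 hτ.1 hρ, fun hρR => hσ.2 ?_⟩⟩
  exact hR.2 ρ hρR σ hσ.1 hρ.1

theorem CoredPair.of_diff_of_upClosedIn {S R : Set (Finset α)} {σ τ : Finset α}
    (h : CoredPair (S \ R) σ τ) (hR : UpClosedIn S R) : CoredPair S σ τ := by
  obtain ⟨hσ, hτ, hστ, hbd⟩ := h
  refine ⟨hσ.1, hτ.1, hστ, Set.eq_singleton_iff_unique_mem.2 ⟨⟨hσ.1, hστ⟩, ?_⟩⟩
  rintro ρ ⟨hρ, hρτ⟩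
  have hρR : ρ ∉ R := fun hρR => hτ.2 (hR.2 ρ hρR τ hτ.1 hρτ.1)
  exact hbd.subset ⟨⟨hρ, hρR⟩, hρτ⟩

section

variable [DecidableEq α] {S : Set (Finset α)} {σ τ θ : Finset α}

theorem immFace_iff_covBy : ImmFace σ τ ↔ σ ⋖ τ := by
  rw [Finset.covBy_iff_card_sdiff_eq_one, ImmFace, and_congr_right_iff]
  intro h
  rw [Finset.card_sdiff_of_subset h]
  have := Finset.card_le_card h
  omega

theorem Set.OrdConnected.insert_mem_cbd (hS : S.OrdConnected) (hσ : σ ∈ S) (hθ : θ ∈ S)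
    (hσθ : σ ⊆ θ) {x : α} (hxθ : x ∈ θ) (hxσ : x ∉ σ) : insert x σ ∈ cbd S σ :=
  ⟨hS.out hσ hθ ⟨Finset.subset_insert x σ, Finset.insert_subset hxθ hσθ⟩,
    immFace_iff_covBy.2 (Finset.covBy_insert hxσ)⟩

theorem Set.OrdConnected.erase_mem_bd (hS : S.OrdConnected) (hθ : θ ∈ S) (hσ : σ ∈ S)
    (hθσ : θ ⊆ σ) {x : α} (hxσ : x ∈ σ) (hxθ : x ∉ θ) : σ.erase x ∈ bd S σ :=
  ⟨hS.out hθ hσ ⟨Finset.subset_erase.2 ⟨hθσ, hxθ⟩, Finset.erase_subset x σ⟩,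
    immFace_iff_covBy.2 (Finset.erase_covBy hxσ)⟩

theorem TopSimplex.upClosedIn (h : TopSimplex S σ) (hS : S.OrdConnected) : UpClosedIn S {σ} := by
  refine ⟨Set.singleton_subset_iff.2 h.1, ?_⟩
  rintro _ rfl θ hθ hσθ
  by_contra hθσ
  obtain ⟨x, hxθ, hxσ⟩ := Finset.exists_of_ssubset (hσθ.ssubset_of_ne (Ne.symm hθσ))
  have := hS.insert_mem_cbd h.1 hθ hσθ hxθ hxσ
  rw [h.2] at this
  exact this

theorem FreeSimplex.downClosedIn (h : FreeSimplex S σ) (hS : S.OrdConnected) :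
    DownClosedIn S {σ} := by
  refine ⟨Set.singleton_subset_iff.2 h.1, ?_⟩
  rintro _ rfl θ hθ hθσ
  by_contra hθσ'
  obtain ⟨x, hxσ, hxθ⟩ := Finset.exists_of_ssubset (hθσ.ssubset_of_ne hθσ')
  have := hS.erase_mem_bd hθ h.1 hθσ hxσ hxθ
  rw [h.2] at this
  exact this

/-- By order-convexity, a vertex of `θ ⊇ σ` outside `τ` would yield a second coface of `σ`. -/
theorem RedPair.upClosedIn (h : RedPair S σ τ) (hS : S.OrdConnected) : UpClosedIn S {σ, τ} := by
  obtain ⟨hσ, hτ, hστ, hcbd⟩ := h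
  have hsup : ∀ θ ∈ S, σ ⊆ θ → θ = σ ∨ θ = τ := by
    intro θ hθ hσθ
    have hθτ : θ ⊆ τ := by
      intro x hxθ
      by_cases hxσ : x ∈ σ
      · exact hστ.1 hxσ
      · have hx := hS.insert_mem_cbd hσ hθ hσθ hxθ hxσ
        rw [hcbd, Set.mem_singleton_iff] at hx
        exact hx ▸ Finset.mem_insert_self x σ
    exact (immFace_iff_covBy.1 hστ).eq_or_eq hσθ hθτ
  refine ⟨Set.insert_subset_iff.2 ⟨hσ, Set.singleton_subset_iff.2 hτ⟩, ?_⟩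
  rintro ρ (rfl | rfl) θ hθ hρθ
  · exact hsup θ hθ hρθ
  · exact hsup θ hθ (hστ.1.trans hρθ)

theorem CoredPair.downClosedIn (h : CoredPair S σ τ) (hS : S.OrdConnected) :
    DownClosedIn S {σ, τ} := by
  obtain ⟨hσ, hτ, hστ, hbd⟩ := h
  have hsub : ∀ θ ∈ S, θ ⊆ τ → θ = σ ∨ θ = τ := by
    intro θ hθ hθτ
    have hσθ : σ ⊆ θ := by
      intro x hxσ
      by_contra hxθ
      have hx := hS.erase_mem_bd hθ hτ hθτ (hστ.1 hxσ) hxθ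
      rw [hbd, Set.mem_singleton_iff] at hx
      exact Finset.notMem_erase x τ (hx ▸ hxσ)
    exact (immFace_iff_covBy.1 hστ).eq_or_eq hσθ hθτ
  refine ⟨Set.insert_subset_iff.2 ⟨hσ, Set.singleton_subset_iff.2 hτ⟩, ?_⟩
  rintro ρ (rfl | rfl) θ hθ hθρ
  · exact hsub θ hθ (hθρ.trans hστ.1)
  · exact hsub θ hθ hθρ

end

theorem Set.OrdConnected.remaining_take [DecidableEq α] {S : Set (Finset α)}
    (hS : S.OrdConnected) {L : List (Op α)} (hL : IsInterSeq S L) (n : ℕ) :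
    (remaining S (L.take n)).OrdConnected := by
  induction L generalizing S n with
  | nil => simpa [remaining] using hS
  | cons o L ih =>
    cases n with
    | zero => simpa [remaining] using hS
    | succ n =>
      obtain ⟨ho, hL⟩ := hL
      refine ih ?_ hL n
      rcases o with ⟨σ, τ⟩ | σ
      · rcases ho with h | h
        exacts [hS.diff_of_downClosedIn (h.downClosedIn hS), hS.diff_of_upClosedIn (h.upClosedIn hS)]
      · rcases ho with h | h
        exacts [hS.diff_of_downClosedIn (h.downClosedIn hS), hS.diff_of_upClosedIn (h.upClosedIn hS)]

theorem remaining_take_succ {S : Set (Finset α)} {L : List (Op α)} {i : ℕ} {o : Op α}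
    (hi : L[i]? = some o) :
    remaining S (L.take (i + 1)) = removeOp (remaining S (L.take i)) o := by
  simp [remaining, List.take_add_one, hi]

theorem reduction_removal_no_new_coreduction_general {α : Type*} [DecidableEq α]
    (S : Set (Finset α)) (hS : IsComplex S)
    (L : List (Op α)) (hL : IsInterSeq S L)
    (i : ℕ) (o : Op α) (hi : L[i]? = some o)
    (hcase :
      (∃ σ' τ', o = Sum.inl (σ', τ') ∧ RedPair (remaining S (L.take i)) σ' τ') ∨
      (∃ σ', o = Sum.inr σ' ∧ TopSimplex (remaining S (L.take i)) σ'))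
    (a b : Finset α) (hcored : CoredPair (remaining S (L.take (i + 1))) a b) :
    CoredPair (remaining S (L.take i)) a b := by
  have hconn := hS.ordConnected.remaining_take hL i
  rw [remaining_take_succ hi] at hcored
  rcases hcase with ⟨σ, τ, rfl, hred⟩ | ⟨σ, rfl, htop⟩
  · exact hcored.of_diff_of_upClosedIn (hred.upClosedIn hconn)
  · exact hcored.of_diff_of_upClosedIn (htop.upClosedIn hconn)

/-- Remark 2, second part: in an interleaved-based algorithm, removing a reduction
pair or a top simplex cannot make a coreduction pair feasible. -/
theorem reduction_removal_no_new_coreduction {α : Type*} [DecidableEq α]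
    (S : Set (Finset α)) (hS : IsComplex S) (hfin : S.Finite)
    (L : List (Op α)) (hL : IsInterSeq S L)
    (i : ℕ) (o : Op α) (hi : L[i]? = some o)
    (hcase :
      (∃ σ' τ', o = Sum.inl (σ', τ') ∧ RedPair (remaining S (L.take i)) σ' τ') ∨
      (∃ σ', o = Sum.inr σ' ∧ TopSimplex (remaining S (L.take i)) σ'))
    (a b : Finset α) (hcored : CoredPair (remaining S (L.take (i + 1))) a b) :
    CoredPair (remaining S (L.take i)) a b :=
  reduction_removal_no_new_coreduction_general S hS L hL i o hi hcase a b hcored
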